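/- arXiv:2204.09870 — 2 statements merged into one kernel-verified Lean document; each statement's English description precedes it below -/
import Mathlib

section
/- (Motzkin–Straus theorem for signed graphs) Let Σ = (G, σ) be a signed graph on n vertices with balanced clique number ω_b(Σ). Then the MS-index of Σ satisfies μ(Σ) = (1/2)·(ω_b(Σ) − 1)/ω_b(Σ). -/
/-!
Switching `σ` by the signs `ε` of a vector `x` turns `xᵀ A(Σ) x` into a form in `|x|` that is
dominated by the unsigned quadratic form of the graph of edges that become positive; on a clique
of that graph `σ i j = ε i * ε j`, so the sign of every cycle inside it telescopes to `1` and the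
clique is balanced. For the unsigned form the classical Motzkin–Straus argument applies: moving the
weight of a vertex onto a non-adjacent one of larger neighbourhood weight does not decrease the
form, so the support may be assumed to be a clique `s`, where Cauchy–Schwarz gives `1 - 1 / |s|`.
Conversely, a balanced clique can be switched to be all-positive (fix a vertex `v` and use the
triangles through `v`), and the uniform vector on it, signed by that switching, attains
`1 - 1 / ω_b`.
-/

open Matrix Finset

/-- `σ` is a sign function on the edges of `G`: symmetric and `±1` on edges. -/
def IsSignFn {n : ℕ} (G : SimpleGraph (Fin n)) (σ : Fin n → Fin n → ℝ) : Prop :=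
  (∀ i j, σ i j = σ j i) ∧ ∀ i j, G.Adj i j → σ i j = 1 ∨ σ i j = -1

/-- The adjacency matrix of the signed graph `(G, σ)`. -/
def signedAdj {n : ℕ} (G : SimpleGraph (Fin n)) [DecidableRel G.Adj]
    (σ : Fin n → Fin n → ℝ) : Matrix (Fin n) (Fin n) ℝ :=
  fun i j => if G.Adj i j then σ i j else 0

/-- The sign of a walk: the product of the signs of its edges (with multiplicity). -/
def walkSign {V : Type*} {G : SimpleGraph V} (σ : V → V → ℝ) {u v : V} (w : G.Walk u v) : ℝ :=
  (w.darts.map fun d => σ d.toProd.1 d.toProd.2).prod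

/-- A signed graph is balanced if every cycle has sign `+1`. -/
def IsBalanced {V : Type*} (G : SimpleGraph V) (σ : V → V → ℝ) : Prop :=
  ∀ (u : V) (w : G.Walk u u), w.IsCycle → walkSign σ w = 1

/-- The set of cardinalities of edge sets whose deletion makes `(G, σ)` balanced.
The frustration index is the least element of this set. -/
def FrustrationSet {n : ℕ} (G : SimpleGraph (Fin n)) (σ : Fin n → Fin n → ℝ) : Set ℕ :=
  {k | ∃ F : Finset (Sym2 (Fin n)), ↑F ⊆ G.edgeSet ∧
    IsBalanced (G.deleteEdges ↑F) σ ∧ F.card = k}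

/-- `S` induces a balanced complete subgraph of `(G, σ)`:
`S` is a clique and every cycle inside `S` has sign `+1`. -/
def IsBalancedClique {n : ℕ} (G : SimpleGraph (Fin n)) (σ : Fin n → Fin n → ℝ)
    (S : Finset (Fin n)) : Prop :=
  G.IsClique (S : Set (Fin n)) ∧
    ∀ (u : Fin n) (w : G.Walk u u), w.IsCycle → (∀ v ∈ w.support, v ∈ S) → walkSign σ w = 1

/-- The set of cardinalities of balanced cliques of `(G, σ)`.
The balanced clique number is the greatest element of this set. -/
def BalancedCliqueSet {n : ℕ} (G : SimpleGraph (Fin n)) (σ : Fin n → Fin n → ℝ) : Set ℕ :=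
  {k | ∃ S : Finset (Fin n), IsBalancedClique G σ S ∧ S.card = k}

/-- Switching equivalence of two sign functions on the same underlying graph. -/
def SwitchingEquiv {n : ℕ} (G : SimpleGraph (Fin n)) (σ₁ σ₂ : Fin n → Fin n → ℝ) : Prop :=
  ∃ η : Fin n → ℝ, (∀ v, η v = 1 ∨ η v = -1) ∧ ∀ i j, G.Adj i j → σ₂ i j = η i * σ₁ i j * η j

/-- The set of values of the quadratic form `xᵀ A(Σ) x / 2` over vectors `x`
with `∑ᵢ |xᵢ| = 1`; the MS-index is its greatest element. -/
def MSSet {n : ℕ} (G : SimpleGraph (Fin n)) [DecidableRel G.Adj]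
    (σ : Fin n → Fin n → ℝ) : Set ℝ :=
  {y | ∃ x : Fin n → ℝ, (∑ i, |x i|) = 1 ∧ y = x ⬝ᵥ (signedAdj G σ) *ᵥ x / 2}

theorem dotProduct_mulVec_eq_sq_sum_abs_sub {V : Type*} [Fintype V] [DecidableEq V]
    (M : Matrix V V ℝ) (x : V → ℝ) (hdiag : ∀ i, M i i = 0)
    (hoff : ∀ i j, i ≠ j → x i * M i j * x j = |x i| * |x j|) :
    x ⬝ᵥ M *ᵥ x = (∑ i, |x i|) ^ 2 - ∑ i, x i ^ 2 := by
  have hterm : ∀ i j, x i * (M i j * x j) = |x i| * |x j| - if i = j then x i ^ 2 else 0 := by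
    intro i j
    rcases eq_or_ne i j with rfl | hij
    · simp [hdiag, sq_abs, ← sq]
    · simp [← hoff i j hij, hij, mul_assoc]
  simp only [dotProduct, mulVec, mul_sum, hterm, sum_sub_distrib, sum_ite_eq, mem_univ, if_true]
  rw [sq, sum_mul_sum]

namespace SimpleGraph

variable {V : Type*} [Fintype V] [DecidableEq V] (H : SimpleGraph V) [DecidableRel H.Adj]

theorem dotProduct_adjMatrix_mulVec_le_transfer {y : V → ℝ} {i j : V}
    (hnadj : ¬H.Adj i j) (hyj : 0 ≤ y j)
    (hN : (H.adjMatrix ℝ *ᵥ y) j ≤ (H.adjMatrix ℝ *ᵥ y) i) :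
    y ⬝ᵥ H.adjMatrix ℝ *ᵥ y ≤
      (y + Pi.single i (y j) - Pi.single j (y j)) ⬝ᵥ
        H.adjMatrix ℝ *ᵥ (y + Pi.single i (y j) - Pi.single j (y j)) := by
  set A := H.adjMatrix ℝ
  set d : V → ℝ := Pi.single i (y j) - Pi.single j (y j) with hd
  have hcross : y ⬝ᵥ A *ᵥ d = d ⬝ᵥ A *ᵥ y := by
    rw [dotProduct_mulVec, dotProduct_comm, ← mulVec_transpose, H.isSymm_adjMatrix.eq]
  have hlin : d ⬝ᵥ A *ᵥ y = y j * ((A *ᵥ y) i - (A *ᵥ y) j) := by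
    rw [hd, sub_dotProduct, single_dotProduct, single_dotProduct]; ring
  have hquad : d ⬝ᵥ A *ᵥ d = 0 := by
    have hnadj' : ¬H.Adj j i := fun h => hnadj h.symm
    simp [hd, A, mulVec_sub, mulVec_single, sub_dotProduct, dotProduct_sub, single_dotProduct,
      hnadj, hnadj']
  have hexpand :
      (y + d) ⬝ᵥ A *ᵥ (y + d) = y ⬝ᵥ A *ᵥ y + 2 * (d ⬝ᵥ A *ᵥ y) + d ⬝ᵥ A *ᵥ d := by
    rw [mulVec_add, add_dotProduct, dotProduct_add, dotProduct_add, hcross]; ring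
  rw [add_sub_assoc, hexpand, hquad, hlin]
  nlinarith [mul_nonneg hyj (sub_nonneg.2 hN)]

theorem dotProduct_adjMatrix_mulVec_le_of_isClique {y : V → ℝ} (hy : 0 ≤ y)
    (hsum : ∑ i, y i = 1) {s : Finset V} (hs : H.IsClique (s : Set V))
    (hsupp : ∀ i, y i ≠ 0 → i ∈ s) :
    y ⬝ᵥ H.adjMatrix ℝ *ᵥ y ≤ 1 - 1 / #s := by
  have hform : y ⬝ᵥ H.adjMatrix ℝ *ᵥ y = 1 - ∑ i, y i ^ 2 := by
    rw [dotProduct_mulVec_eq_sq_sum_abs_sub _ _ (by simp)]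
    · simp [abs_of_nonneg (hy _), hsum]
    · intro i j hij
      by_cases h : y i ≠ 0 ∧ y j ≠ 0
      · simp [hs (hsupp i h.1) (hsupp j h.2) hij, abs_of_nonneg (hy _)]
      · rcases not_and_or.1 h with h | h <;> simp_all
  have hsum_s : ∑ i ∈ s, y i = 1 := by
    rw [← hsum]
    exact sum_subset (subset_univ s) fun i _ hi => by_contra fun h => hi (hsupp i h)
  have hcard : (0 : ℝ) < #s := by
    exact_mod_cast card_pos.2 (nonempty_of_sum_ne_zero (by rw [hsum_s]; exact one_ne_zero))
  have hcs : 1 ≤ #s * ∑ i, y i ^ 2 := calc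
    (1 : ℝ) = (∑ i ∈ s, y i) ^ 2 := by rw [hsum_s]; norm_num
    _ ≤ #s * ∑ i ∈ s, y i ^ 2 := sq_sum_le_card_mul_sum_sq
    _ ≤ #s * ∑ i, y i ^ 2 := mul_le_mul_of_nonneg_left
      (sum_le_sum_of_subset_of_nonneg (subset_univ s) fun i _ _ => sq_nonneg _) (Nat.cast_nonneg _)
  rw [hform, sub_le_sub_iff_left, div_le_iff₀ hcard]
  linarith

theorem exists_isClique_dotProduct_adjMatrix_mulVec_le {y : V → ℝ} (hy : 0 ≤ y)
    (hsum : ∑ i, y i = 1) :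
    ∃ s : Finset V, s.Nonempty ∧ H.IsClique (s : Set V) ∧
      y ⬝ᵥ H.adjMatrix ℝ *ᵥ y ≤ 1 - 1 / #s := by
  induction hk : #{i | y i ≠ 0} using Nat.strong_induction_on generalizing y with
  | _ k ih =>
  set s : Finset V := {i | y i ≠ 0} with hs
  have hsupp : ∀ i, y i ≠ 0 → i ∈ s := by simp [hs]
  by_cases hclique : H.IsClique (s : Set V)
  · refine ⟨s, ?_, hclique, H.dotProduct_adjMatrix_mulVec_le_of_isClique hy hsum hclique hsupp⟩
    obtain ⟨i, -, hi⟩ :=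
      exists_ne_zero_of_sum_ne_zero (s := univ) (by rw [hsum]; exact one_ne_zero)
    exact ⟨i, hsupp i hi⟩
  obtain ⟨i, hi, j, hj, hij, hnadj⟩ : ∃ i ∈ s, ∃ j ∈ s, i ≠ j ∧ ¬H.Adj i j := by
    simpa [IsClique, Set.Pairwise] using hclique
  wlog hN : (H.adjMatrix ℝ *ᵥ y) j ≤ (H.adjMatrix ℝ *ᵥ y) i generalizing i j
  · exact this j hj i hi hij.symm (fun h => hnadj h.symm) (le_of_not_ge hN)
  set y' : V → ℝ := y + Pi.single i (y j) - Pi.single j (y j) with hy'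
  have hy'_apply : ∀ l, y' l = y l + (if l = i then y j else 0) - (if l = j then y j else 0) := by
    intro l; simp [hy', Pi.single_apply]
  have hy'_nonneg : 0 ≤ y' := by
    intro l
    rw [Pi.zero_apply, hy'_apply]
    rcases eq_or_ne l j with rfl | hlj
    · simp [hij.symm]
    · have hyl : 0 ≤ y l := hy l
      have hyj : 0 ≤ y j := hy j
      split_ifs <;> linarith
  have hy'_sum : ∑ l, y' l = 1 := by
    simp [hy'_apply, sum_add_distrib, sum_sub_distrib, hsum]
  have hy'_supp : ({l | y' l ≠ 0} : Finset V) ⊂ s := by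
    refine ssubset_of_subset_of_ne ?_ fun h => ?_
    · intro l hl
      simp only [mem_filter, mem_univ, true_and] at hl
      rw [hy'_apply] at hl
      split_ifs at hl <;> simp_all
    · have : j ∈ ({l | y' l ≠ 0} : Finset V) := h ▸ hj
      simp [hy'_apply, hij.symm] at this
  obtain ⟨t, ht, htc, hle⟩ := ih _ (hk ▸ card_lt_card hy'_supp) hy'_nonneg hy'_sum rfl
  exact ⟨t, ht, htc, (H.dotProduct_adjMatrix_mulVec_le_transfer hnadj (hy j) hN).trans hle⟩

end SimpleGraph

open SimpleGraph

section WalkSign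
variable {V : Type*} {G : SimpleGraph V}

theorem walkSign_cons (σ : V → V → ℝ) {u v w : V} (h : G.Adj u v) (p : G.Walk v w) :
    walkSign σ (Walk.cons h p) = σ u v * walkSign σ p := by
  simp [walkSign]

theorem walkSign_congr {σ τ : V → V → ℝ} {u v : V} (w : G.Walk u v)
    (h : ∀ d ∈ w.darts, σ d.fst d.snd = τ d.fst d.snd) : walkSign σ w = walkSign τ w :=
  congrArg List.prod (List.map_congr_left h)

theorem walkSign_of_mul_self_eq_one {η : V → ℝ} (hη : ∀ v, η v * η v = 1) {u v : V}
    (w : G.Walk u v) :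
    walkSign (fun a b => η a * η b) w = η u * η v := by
  induction w with
  | nil => simp [walkSign, hη]
  | @cons a b c h p ih => rw [walkSign_cons, ih]; linear_combination η a * η c * hη b

end WalkSign

/-- For `ε = ±1`, the edges of `G` that become positive after switching `σ` by `ε`. -/
def agreementGraph {V : Type*} (G : SimpleGraph V) (σ : V → V → ℝ) (ε : V → ℝ) :
    SimpleGraph V where
  Adj i j := G.Adj i j ∧ σ i j = ε i * ε j ∧ σ j i = ε j * ε i
  symm := ⟨fun _ _ h => ⟨h.1.symm, h.2.2, h.2.1⟩⟩
  loopless := ⟨fun _ h => G.loopless.irrefl _ h.1⟩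

section SignedGraph
variable {n : ℕ} {G : SimpleGraph (Fin n)} {σ : Fin n → Fin n → ℝ}

theorem isBalancedClique_of_isClique_agreementGraph {ε : Fin n → ℝ} (hε : ∀ v, ε v * ε v = 1)
    {S : Finset (Fin n)} (hS : (agreementGraph G σ ε).IsClique (S : Set (Fin n))) :
    IsBalancedClique G σ S := by
  refine ⟨hS.mono (show agreementGraph G σ ε ≤ G from fun _ _ h => h.1), fun u w _ hw => ?_⟩
  rw [walkSign_congr (τ := fun a b => ε a * ε b) w, walkSign_of_mul_self_eq_one hε, hε]
  intro d hd
  exact (hS (hw _ (w.dart_fst_mem_support_of_mem_darts hd))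
    (hw _ (w.dart_snd_mem_support_of_mem_darts hd)) d.adj.ne).2.1

theorem dotProduct_signedAdj_mulVec_le [DecidableRel G.Adj] {ε : Fin n → ℝ}
    [DecidableRel (agreementGraph G σ ε).Adj] (hσ : IsSignFn G σ) (hε : ∀ i, ε i = 1 ∨ ε i = -1)
    {x : Fin n → ℝ} (hx : ∀ i, x i = ε i * |x i|) :
    x ⬝ᵥ signedAdj G σ *ᵥ x ≤ |x| ⬝ᵥ (agreementGraph G σ ε).adjMatrix ℝ *ᵥ |x| := by
  simp only [dotProduct, mulVec, mul_sum]
  refine sum_le_sum fun i _ => sum_le_sum fun j _ => ?_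
  have hprod : x i * (signedAdj G σ i j * x j) =
      ε i * signedAdj G σ i j * ε j * (|x i| * |x j|) := by
    conv_lhs => rw [hx i, hx j]
    ring
  rw [hprod, Pi.abs_apply, Pi.abs_apply, adjMatrix_apply, signedAdj]
  have habs : 0 ≤ |x i| * |x j| := by positivity
  by_cases hadj : G.Adj i j
  · rcases hσ.2 i j hadj with hs | hs <;> rcases hε i with hi | hi <;> rcases hε j with hj | hj <;>
      norm_num [agreementGraph, hadj, hs, hσ.1 j i, hi, hj] <;> linarith
  · simp [hadj, agreementGraph]

theorem IsBalancedClique.triangle_sign {S : Finset (Fin n)} (hS : IsBalancedClique G σ S)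
    {a b c : Fin n} (ha : a ∈ S) (hb : b ∈ S) (hc : c ∈ S) (hab : a ≠ b) (hbc : b ≠ c)
    (hca : c ≠ a) : σ a b * σ b c * σ c a = 1 := by
  have hclique := hS.1
  let w : G.Walk a a :=
    .cons (hclique ha hb hab) (.cons (hclique hb hc hbc) (.cons (hclique hc ha hca) .nil))
  have hcycle : w.IsCycle := by
    simp [w, Walk.cons_isCycle_iff, hab, hbc, hca, hab.symm, hca.symm]
  have := hS.2 a w hcycle (by simp [w, ha, hb, hc])
  simpa [w, walkSign, mul_assoc] using this

theorem IsBalancedClique.exists_sign_eq_mul (hσ : IsSignFn G σ) {S : Finset (Fin n)}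
    (hS : IsBalancedClique G σ S) :
    ∃ η : Fin n → ℝ, (∀ i ∈ S, η i = 1 ∨ η i = -1) ∧
      ∀ i ∈ S, ∀ j ∈ S, i ≠ j → σ i j = η i * η j := by
  rcases S.eq_empty_or_nonempty with rfl | ⟨v, hv⟩
  · exact ⟨1, by simp, by simp⟩
  have hsq : ∀ u ∈ S, u ≠ v → σ v u * σ v u = 1 := fun u hu huv => by
    rcases hσ.2 v u (hS.1 hv hu huv.symm) with h | h <;> rw [h] <;> norm_num
  refine ⟨fun u => if u = v then 1 else σ v u, fun u hu => ?_, fun i hi j hj hij => ?_⟩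
  · by_cases huv : u = v
    · simp [huv]
    · simpa [huv] using hσ.2 v u (hS.1 hv hu (Ne.symm huv))
  by_cases hiv : i = v
  · subst hiv; simp [hij.symm]
  by_cases hjv : j = v
  · subst hjv; simp [hiv, hσ.1 i j]
  simp only [hiv, hjv, if_false]
  have htri := hS.triangle_sign hv hi hj (Ne.symm hiv) hij hjv
  rw [hσ.1 j v] at htri
  linear_combination (σ v i * σ v j) * htri - σ i j * hsq i hi hiv -
    σ i j * σ v i * σ v i * hsq j hj hjv

theorem IsBalancedClique.half_one_sub_inv_card_mem_MSSet [DecidableRel G.Adj]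
    (hσ : IsSignFn G σ) {S : Finset (Fin n)} (hS : IsBalancedClique G σ S) (hne : S.Nonempty) :
    (1 - 1 / (#S : ℝ)) / 2 ∈ MSSet G σ := by
  obtain ⟨η, hη, hση⟩ := hS.exists_sign_eq_mul hσ
  have hcard : (0 : ℝ) < #S := by exact_mod_cast hne.card_pos
  set x : Fin n → ℝ := fun i => if i ∈ S then η i / #S else 0
  have habs : ∀ i, |x i| = if i ∈ S then 1 / (#S : ℝ) else 0 := fun i => by
    by_cases hi : i ∈ S
    · rcases hη i hi with h | h <;> simp [x, hi, h, abs_div, abs_of_pos hcard]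
    · simp [x, hi]
  have hsum : ∑ i, |x i| = 1 := by simp [habs, hcard.ne']
  refine ⟨x, hsum, ?_⟩
  rw [dotProduct_mulVec_eq_sq_sum_abs_sub _ _ (fun i => by simp [signedAdj]) ?_, hsum]
  · simp only [← sq_abs (x _), habs]
    simp
    field_simp
  · intro i j hij
    by_cases hij' : i ∈ S ∧ j ∈ S
    · obtain ⟨hi, hj⟩ := hij'
      rw [habs, habs]
      simp only [x, signedAdj, hi, hj, hS.1 hi hj hij, if_true, hση i hi j hj hij]
      rcases hη i hi with h | h <;> rcases hη j hj with h' | h' <;> simp [h, h'] <;> field_simp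
    · rcases not_and_or.1 hij' with h | h <;> simp [x, h]

theorem exists_isBalancedClique_le_of_mem_MSSet [DecidableRel G.Adj] (hσ : IsSignFn G σ)
    {μ : ℝ} (hμ : μ ∈ MSSet G σ) :
    ∃ T : Finset (Fin n), T.Nonempty ∧ IsBalancedClique G σ T ∧ μ ≤ (1 - 1 / (#T : ℝ)) / 2 := by
  classical
  obtain ⟨x, hx1, rfl⟩ := hμ
  set ε : Fin n → ℝ := fun i => if 0 ≤ x i then 1 else -1
  have hε : ∀ i, ε i = 1 ∨ ε i = -1 := fun i => by by_cases h : 0 ≤ x i <;> simp [ε, h]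
  have hx : ∀ i, x i = ε i * |x i| := fun i => by
    by_cases h : 0 ≤ x i <;> simp [ε, h, abs_of_nonneg, abs_of_neg (not_le.1 h)]
  obtain ⟨T, hT, hTc, hle⟩ := (agreementGraph G σ ε).exists_isClique_dotProduct_adjMatrix_mulVec_le
    (abs_nonneg x) (by simpa using hx1)
  refine ⟨T, hT, isBalancedClique_of_isClique_agreementGraph
    (fun v => by rcases hε v with h | h <;> rw [h] <;> norm_num) hTc, ?_⟩
  linarith [dotProduct_signedAdj_mulVec_le hσ hε hx]

end SignedGraph

/-- Motzkin–Straus for signed graphs: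
`μ(Σ) = (1/2)·(ω_b(Σ) - 1)/ω_b(Σ)`. -/
theorem stmt_10 {n : ℕ} (G : SimpleGraph (Fin n)) [DecidableRel G.Adj]
    (σ : Fin n → Fin n → ℝ) (hσ : IsSignFn G σ)
    (μ : ℝ) (hμ : IsGreatest (MSSet G σ) μ)
    (ωb : ℕ) (hω : IsGreatest (BalancedCliqueSet G σ) ωb) :
    μ = (1 / 2 : ℝ) * (((ωb : ℝ) - 1) / ωb) := by
  obtain ⟨T, hT, hTbal, hμT⟩ := exists_isBalancedClique_le_of_mem_MSSet hσ hμ.1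
  have hTω : #T ≤ ωb := hω.2 ⟨T, hTbal, rfl⟩
  obtain ⟨S, hS, rfl⟩ := hω.1
  have hSpos : (0 : ℝ) < #S := by exact_mod_cast hT.card_pos.trans_le hTω
  have hμS := hμ.2 (hS.half_one_sub_inv_card_mem_MSSet hσ (card_pos.1 (by exact_mod_cast hSpos)))
  have hTS : 1 - 1 / (#T : ℝ) ≤ 1 - 1 / #S := by gcongr
  rw [← one_sub_div hSpos.ne']
  linarith
end

section
/- Let Σ = (G, σ) be a signed graph with n vertices and balanced clique number ω_b(Σ), and let λ₁(Σ) be the largest eigenvalue of A(Σ). Then λ₁(Σ) ≤ n·(1 − 1/ω_b(Σ)). -/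
open Matrix Finset

/-!
Let `v` be a unit eigenvector for `λ₁`, so `λ₁ = vᵀ A(Σ) v`. Keeping only the edges `ij` with
`σ_ij v_i v_j > 0` gives an unsigned graph `H` with `vᵀ A(Σ) v ≤ |v|ᵀ A(H) |v|`. Switching by the
signs of `v` makes every edge of `H` positive, so each clique of `H` is a balanced clique of `Σ`
and `ω(H) ≤ ω_b(Σ)`. The Motzkin–Straus inequality `xᵀ A(H) x ≤ (1 - 1/ω(H)) (∑ xᵢ)²` for `x ≥ 0`,
together with `(∑ |vᵢ|)² ≤ n ‖v‖² = n`, gives the bound.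
-/

theorem Matrix.IsSymm.dotProduct_add_smul_mulVec {V : Type*} [Fintype V] {A : Matrix V V ℝ}
    (hA : A.IsSymm) (x d : V → ℝ) (c : ℝ) :
    (x + c • d) ⬝ᵥ A *ᵥ (x + c • d) =
      x ⬝ᵥ A *ᵥ x + 2 * c * (d ⬝ᵥ A *ᵥ x) + c ^ 2 * (d ⬝ᵥ A *ᵥ d) := by
  have hxd : x ⬝ᵥ A *ᵥ d = d ⬝ᵥ A *ᵥ x := by
    rw [dotProduct_mulVec, ← mulVec_transpose, hA.eq, dotProduct_comm]
  simp only [mulVec_add, mulVec_smul, dotProduct_add, add_dotProduct, dotProduct_smul,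
    smul_dotProduct, hxd, smul_eq_mul]
  ring

namespace SimpleGraph

variable {V : Type*} [Fintype V] [DecidableEq V] (H : SimpleGraph V) [DecidableRel H.Adj]

theorem dotProduct_adjMatrix_mulVec_le_sq_sum_sub {x : V → ℝ} (hx : 0 ≤ x) :
    x ⬝ᵥ H.adjMatrix ℝ *ᵥ x ≤ (∑ i, x i) ^ 2 - ∑ i, x i ^ 2 := by
  have hoff : ∀ i j,
      (if H.Adj i j then x i * x j else 0) ≤ x i * x j - if i = j then x i ^ 2 else 0 := by
    intro i j
    by_cases hij : i = j
    · subst hij; simp [sq]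
    · have := mul_nonneg (hx i) (hx j)
      split_ifs <;> simp_all
  calc x ⬝ᵥ H.adjMatrix ℝ *ᵥ x
      ≤ ∑ i, ∑ j, (x i * x j - if i = j then x i ^ 2 else 0) := by
        rw [SimpleGraph.dotProduct_mulVec_adjMatrix]
        exact sum_le_sum fun i _ => sum_le_sum fun j _ => hoff i j
    _ = (∑ i, x i) ^ 2 - ∑ i, x i ^ 2 := by
        simp only [sum_sub_distrib, sum_ite_eq, mem_univ, if_true, ← sum_mul_sum, sq]

theorem dotProduct_adjMatrix_mulVec_le_of_card_support_le {x : V → ℝ} (hx : 0 ≤ x) {r : ℕ}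
    (hr : #{i | x i ≠ 0} ≤ r) :
    x ⬝ᵥ H.adjMatrix ℝ *ᵥ x ≤ (1 - 1 / r) * (∑ i, x i) ^ 2 := by
  have hcs : (∑ i, x i) ^ 2 ≤ r * ∑ i, x i ^ 2 := calc
    (∑ i, x i) ^ 2 = (∑ i ∈ {i | x i ≠ 0}, x i) ^ 2 := by rw [sum_filter_ne_zero]
    _ ≤ #{i | x i ≠ 0} * ∑ i ∈ {i | x i ≠ 0}, x i ^ 2 := sq_sum_le_card_mul_sum_sq
    _ ≤ r * ∑ i, x i ^ 2 := by
        rw [sum_filter_of_ne fun i _ h => by simpa using h]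
        gcongr
  have hquad := H.dotProduct_adjMatrix_mulVec_le_sq_sum_sub hx
  have hsq : 0 ≤ ∑ i, x i ^ 2 := by positivity
  rcases Nat.eq_zero_or_pos r with rfl | hr0
  · simp only [CharP.cast_eq_zero, div_zero, sub_zero, one_mul]
    linarith
  · have : (∑ i, x i) ^ 2 / r ≤ ∑ i, x i ^ 2 := by
      rw [div_le_iff₀ (by exact_mod_cast hr0)]; linarith
    have : (1 - 1 / (r : ℝ)) * (∑ i, x i) ^ 2 = (∑ i, x i) ^ 2 - (∑ i, x i) ^ 2 / r := by ring
    linarith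

theorem dotProduct_adjMatrix_mulVec_le_shift {x : V → ℝ} {a b : V}
    (hnadj : ¬ H.Adj a b) (hb : 0 ≤ x b)
    (hle : (H.adjMatrix ℝ *ᵥ x) b ≤ (H.adjMatrix ℝ *ᵥ x) a) :
    x ⬝ᵥ H.adjMatrix ℝ *ᵥ x ≤
      (x + x b • (Pi.single a 1 - Pi.single b 1)) ⬝ᵥ
        H.adjMatrix ℝ *ᵥ (x + x b • (Pi.single a 1 - Pi.single b 1)) := by
  rw [H.isSymm_adjMatrix.dotProduct_add_smul_mulVec]
  have hlin : (Pi.single a 1 - Pi.single b 1) ⬝ᵥ H.adjMatrix ℝ *ᵥ x =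
      (H.adjMatrix ℝ *ᵥ x) a - (H.adjMatrix ℝ *ᵥ x) b := by
    rw [sub_dotProduct, single_one_dotProduct, single_one_dotProduct]
  have hquad : (Pi.single a 1 - Pi.single b 1 : V → ℝ) ⬝ᵥ
      H.adjMatrix ℝ *ᵥ (Pi.single a 1 - Pi.single b 1) = 0 := by
    have hnadj' : ¬ H.Adj b a := fun h => hnadj h.symm
    simp [mulVec_sub, sub_dotProduct, hnadj, hnadj']
  rw [hlin, hquad]
  nlinarith [mul_nonneg hb (sub_nonneg.mpr hle)]

theorem exists_le_dotProduct_adjMatrix_mulVec_of_not_adj {x : V → ℝ} (hx : 0 ≤ x) {a b : V}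
    (hab : a ≠ b) (hnadj : ¬ H.Adj a b) (ha : x a ≠ 0) (hb : x b ≠ 0) :
    ∃ y : V → ℝ, 0 ≤ y ∧ ∑ i, y i = ∑ i, x i ∧ #{i | y i ≠ 0} < #{i | x i ≠ 0} ∧
      x ⬝ᵥ H.adjMatrix ℝ *ᵥ x ≤ y ⬝ᵥ H.adjMatrix ℝ *ᵥ y := by
  wlog hle : (H.adjMatrix ℝ *ᵥ x) b ≤ (H.adjMatrix ℝ *ᵥ x) a generalizing a b
  · exact this hab.symm (fun h => hnadj h.symm) hb ha (le_of_not_ge hle)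
  set y := x + x b • (Pi.single a 1 - Pi.single b 1 : V → ℝ) with hy
  have hy_apply :
      ∀ i, y i = x i + x b * ((if i = a then 1 else 0) - if i = b then 1 else 0) := fun i => by
    simp [hy, Pi.single_apply]
  refine ⟨y, fun i => ?_, ?_, ?_, H.dotProduct_adjMatrix_mulVec_le_shift hnadj (hx b) hle⟩
  · have hxi : 0 ≤ x i := hx i
    have hxb : 0 ≤ x b := hx b
    rw [Pi.zero_apply, hy_apply]; split_ifs <;> subst_vars <;> linarith
  · simp [hy_apply, sum_add_distrib, ← mul_sum]
  · have hsub : ({i | y i ≠ 0} : Finset V) ⊆ ({i | x i ≠ 0} : Finset V).erase b := by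
      intro i
      simp only [mem_filter, mem_univ, true_and, mem_erase, hy_apply]
      split_ifs <;> simp_all
    exact (card_le_card hsub).trans_lt (card_erase_lt_of_mem (by simpa using hb))

theorem dotProduct_adjMatrix_mulVec_le_of_isClique_card_le {r : ℕ}
    (hr : ∀ s : Finset V, H.IsClique (s : Set V) → #s ≤ r) {x : V → ℝ} (hx : 0 ≤ x) :
    x ⬝ᵥ H.adjMatrix ℝ *ᵥ x ≤ (1 - 1 / r) * (∑ i, x i) ^ 2 := by
  -- shifting weight between non-adjacent vertices shrinks the support until it is a clique
  induction hk : #{i | x i ≠ 0} using Nat.strong_induction_on generalizing x with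
  | _ k ih =>
  by_cases hclique : H.IsClique (({i | x i ≠ 0} : Finset V) : Set V)
  · exact H.dotProduct_adjMatrix_mulVec_le_of_card_support_le hx (hr _ hclique)
  · obtain ⟨a, ha, b, hb, hab, hnadj⟩ :
        ∃ a, x a ≠ 0 ∧ ∃ b, x b ≠ 0 ∧ a ≠ b ∧ ¬ H.Adj a b := by
      simpa [isClique_iff, Set.Pairwise] using hclique
    obtain ⟨y, hy, hsum, hcard, hle⟩ :=
      H.exists_le_dotProduct_adjMatrix_mulVec_of_not_adj hx hab hnadj ha hb
    calc x ⬝ᵥ H.adjMatrix ℝ *ᵥ x ≤ y ⬝ᵥ H.adjMatrix ℝ *ᵥ y := hle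
      _ ≤ (1 - 1 / r) * (∑ i, y i) ^ 2 := ih _ (hk ▸ hcard) hy rfl
      _ = (1 - 1 / r) * (∑ i, x i) ^ 2 := by rw [hsum]

end SimpleGraph

theorem walkSign_eq_mul_of_forall_dart {V : Type*} {G : SimpleGraph V} {σ : V → V → ℝ}
    {η : V → ℝ} (hη : ∀ x, η x * η x = 1) {u v : V} (w : G.Walk u v)
    (hw : ∀ d ∈ w.darts, σ d.fst d.snd = η d.fst * η d.snd) :
    walkSign σ w = η u * η v := by
  induction w with
  | nil => simp [walkSign, hη]
  | @cons u b v h p ih =>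
    have hp : walkSign σ p = η b * η v :=
      ih fun d hd => hw d (List.mem_cons_of_mem _ hd)
    have hub : σ u b = η u * η b := hw _ List.mem_cons_self
    calc walkSign σ (.cons h p) = σ u b * walkSign σ p := by simp [walkSign]
      _ = η u * η v * (η b * η b) := by rw [hub, hp]; ring
      _ = η u * η v := by rw [hη, mul_one]

theorem eq_ite_mul_ite_of_pos {s p q : ℝ} (hs : s = 1 ∨ s = -1) (h : 0 < s * (p * q)) :
    s = (if p < 0 then -1 else 1) * (if q < 0 then -1 else 1) := by
  rcases hs with rfl | rfl <;> split_ifs <;> nlinarith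

def positiveGraph {n : ℕ} (G : SimpleGraph (Fin n)) (σ : Fin n → Fin n → ℝ)
    (hσ : ∀ i j, σ i j = σ j i) (v : Fin n → ℝ) : SimpleGraph (Fin n) where
  Adj i j := G.Adj i j ∧ 0 < σ i j * (v i * v j)
  symm := ⟨fun i j h => ⟨h.1.symm, by rw [hσ, mul_comm (v j)]; exact h.2⟩⟩
  loopless := ⟨fun i h => G.irrefl h.1⟩

section positiveGraph

variable {n : ℕ} {G : SimpleGraph (Fin n)} {σ : Fin n → Fin n → ℝ}

noncomputable instance [DecidableRel G.Adj] (hσ : ∀ i j, σ i j = σ j i) (v : Fin n → ℝ) :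
    DecidableRel (positiveGraph G σ hσ v).Adj :=
  fun i j => inferInstanceAs (Decidable (G.Adj i j ∧ 0 < σ i j * (v i * v j)))

theorem positiveGraph_adj {hσ : ∀ i j, σ i j = σ j i} {v : Fin n → ℝ} {i j : Fin n} :
    (positiveGraph G σ hσ v).Adj i j ↔ G.Adj i j ∧ 0 < σ i j * (v i * v j) :=
  Iff.rfl

theorem isBalancedClique_of_isClique_positiveGraph (hσ : IsSignFn G σ) {v : Fin n → ℝ}
    {S : Finset (Fin n)} (hS : (positiveGraph G σ hσ.1 v).IsClique (S : Set (Fin n))) :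
    IsBalancedClique G σ S := by
  refine ⟨fun i hi j hj hij => (positiveGraph_adj.mp (hS hi hj hij)).1, fun u w _ hwS => ?_⟩
  -- switching by the signs of `v` makes every edge of `positiveGraph` positive
  set η : Fin n → ℝ := fun i => if v i < 0 then -1 else 1
  have hη : ∀ i, η i * η i = 1 := fun i => by by_cases h : v i < 0 <;> simp [η, h]
  rw [walkSign_eq_mul_of_forall_dart hη w fun d hd => ?_, hη]
  have hadj := positiveGraph_adj.mp <|
    hS (hwS _ (w.dart_fst_mem_support_of_mem_darts hd))
      (hwS _ (w.dart_snd_mem_support_of_mem_darts hd)) d.adj.ne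
  exact eq_ite_mul_ite_of_pos (hσ.2 _ _ hadj.1) hadj.2

theorem dotProduct_signedAdj_mulVec_le_abs [DecidableRel G.Adj] (hσ : IsSignFn G σ)
    (v : Fin n → ℝ) :
    v ⬝ᵥ signedAdj G σ *ᵥ v ≤ |v| ⬝ᵥ (positiveGraph G σ hσ.1 v).adjMatrix ℝ *ᵥ |v| := by
  rw [SimpleGraph.dotProduct_mulVec_adjMatrix]
  simp only [dotProduct, mulVec, mul_sum]
  refine sum_le_sum fun i _ => sum_le_sum fun j _ => ?_
  by_cases hG : G.Adj i j
  · by_cases hpos : 0 < σ i j * (v i * v j)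
    · have habs : |σ i j| = 1 := by rcases hσ.2 i j hG with h | h <;> simp [h]
      rw [if_pos (positiveGraph_adj.mpr ⟨hG, hpos⟩), signedAdj, if_pos hG, Pi.abs_apply,
        Pi.abs_apply, ← abs_mul]
      refine le_of_eq ?_
      calc v i * (σ i j * v j) = |σ i j * (v i * v j)| := by rw [abs_of_pos hpos]; ring
        _ = |v i * v j| := by rw [abs_mul, habs, one_mul]
    · rw [if_neg fun h => hpos h.2, signedAdj, if_pos hG]
      linarith
  · rw [if_neg fun h => hG h.1, signedAdj, if_neg hG]
    simp

theorem dotProduct_signedAdj_mulVec_le_s17 [DecidableRel G.Adj] (hσ : IsSignFn G σ) {ωb : ℕ}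
    (hω : ∀ S, IsBalancedClique G σ S → #S ≤ ωb) (v : Fin n → ℝ) :
    v ⬝ᵥ signedAdj G σ *ᵥ v ≤ (1 - 1 / ωb) * (∑ i, |v i|) ^ 2 :=
  calc v ⬝ᵥ signedAdj G σ *ᵥ v
      ≤ |v| ⬝ᵥ (positiveGraph G σ hσ.1 v).adjMatrix ℝ *ᵥ |v| :=
        dotProduct_signedAdj_mulVec_le_abs hσ v
    _ ≤ (1 - 1 / ωb) * (∑ i, |v i|) ^ 2 :=
        (positiveGraph G σ hσ.1 v).dotProduct_adjMatrix_mulVec_le_of_isClique_card_le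
          (fun S hS => hω S (isBalancedClique_of_isClique_positiveGraph hσ hS)) (abs_nonneg v)

end positiveGraph

/-- `λ₁(Σ) ≤ n(1 - 1/ω_b(Σ))`. -/
theorem stmt_17 {n : ℕ} (G : SimpleGraph (Fin n)) [DecidableRel G.Adj]
    (σ : Fin n → Fin n → ℝ) (hσ : IsSignFn G σ)
    (hA : (signedAdj G σ).IsHermitian)
    (lam1 : ℝ) (hlam : IsGreatest (Set.range hA.eigenvalues) lam1)
    (ωb : ℕ) (hω : IsGreatest (BalancedCliqueSet G σ) ωb) :
    lam1 ≤ (n : ℝ) * (1 - 1 / ωb) := by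
  obtain ⟨i, rfl⟩ := hlam.1
  set v : Fin n → ℝ := ⇑(hA.eigenvectorBasis i)
  have hv : ∑ j, v j ^ 2 = 1 := by
    have h := hA.eigenvectorBasis.orthonormal.1 i
    rw [EuclideanSpace.norm_eq] at h
    simpa using h
  have hcs : (∑ j, |v j|) ^ 2 ≤ n := by
    simpa [hv] using sq_sum_le_card_mul_sum_sq (s := univ) (f := fun j => |v j|)
  have hω0 : 0 ≤ 1 - 1 / (ωb : ℝ) := sub_nonneg.mpr (by simpa using Nat.cast_inv_le_one ωb)
  calc hA.eigenvalues i = v ⬝ᵥ signedAdj G σ *ᵥ v := by simpa using hA.eigenvalues_eq i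
    _ ≤ (1 - 1 / ωb) * (∑ j, |v j|) ^ 2 :=
        dotProduct_signedAdj_mulVec_le_s17 hσ (fun S hS => hω.2 ⟨S, hS, rfl⟩) v
    _ ≤ n * (1 - 1 / ωb) := by rw [mul_comm (n : ℝ)]; gcongr
end
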